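/- arXiv:2206.04552 — 2 statements merged into one kernel-verified Lean document; each statement's English description precedes it below -/
import Mathlib

section
/- Gaussian-mixture representation of the IMQ kernel Stein discrepancy (identity established in the proof of Corollary 2): let T : X → X be a bounded linear operator, S = T*T, and assume ∫ ‖x‖² dQ(x) < ∞ and ∫ ‖C DU(x)‖² dQ(x) < ∞. Let γ be the standard Gaussian measure N(0,1) on ℝ. Then ∫_X ∫_X h_v^{IMQ-T}(x,x') dQ(x) dQ(x') = ∫_ℝ [ ∫_X ∫_X h_v^{SE-ηT}(x,x') dQ(x) dQ(x') ] dγ(η). -/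
/-!
For fixed `x, y` both kernels are built from the same three coefficients `A, B, D`: the SE-`ηT`
kernel is `exp (-η² ‖T (x - y)‖² / 2) * (A + η² B + η⁴ D)` and the IMQ-`T` kernel is
`k A + k³ B + 3 k⁵ D` with `k = (‖T (x - y)‖² + 1)^(-1/2)`. Against `N(0,1)` the weight
`exp (-η² a / 2)` is `k` times the density of `N(0, k²)`, whose moments `1, k², 3k⁴` turn the
first expression into the second. The coefficients grow at most quadratically in `‖x‖`,
`‖C (DU x)‖`, `‖y‖`, `‖C (DU y)‖`, so the second-moment assumptions make the SE kernel
integrable for `N(0,1) ⊗ Q ⊗ Q`, and Fubini exchanges the `η`-integral with the double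
`Q`-integral.
-/

open MeasureTheory ProbabilityTheory Complex Filter
open scoped RealInnerProductSpace

/-- The explicit vectorised Stein kernel of the SE-`ηT` kernel. -/
noncomputable def hvSE {X : Type*} [NormedAddCommGroup X] [InnerProductSpace ℝ X]
    [CompleteSpace X] (C T : X →L[ℝ] X) (DU : X → X) (e : ℕ → X) (l : ℕ → ℝ)
    (η : ℝ) (x y : X) : ℝ :=
  letI S := (ContinuousLinearMap.adjoint T).comp T
  Real.exp (-(η ^ 2 / 2) * ‖T (x - y)‖ ^ 2) *
    (⟪x + C (DU x), y + C (DU y)⟫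
      - η ^ 2 * ⟪S (C (x - y)), x - y⟫
      - η ^ 2 * ⟪S (C (C (DU x) - C (DU y))), x - y⟫
      + η ^ 2 * (∑' i, l i ^ 2 * ⟪S (e i), e i⟫)
      - η ^ 4 * ‖C (S (x - y))‖ ^ 2)

/-- The explicit vectorised Stein kernel of the IMQ-`T` kernel. -/
noncomputable def hvIMQ {X : Type*} [NormedAddCommGroup X] [InnerProductSpace ℝ X]
    [CompleteSpace X] (C T : X →L[ℝ] X) (DU : X → X) (e : ℕ → X) (l : ℕ → ℝ)
    (x y : X) : ℝ :=
  letI S := (ContinuousLinearMap.adjoint T).comp T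
  letI kk := (‖T (x - y)‖ ^ 2 + 1) ^ (-(1 / 2) : ℝ)
  kk * ⟪x + C (DU x), y + C (DU y)⟫
    + kk ^ 3 * ((∑' i, l i ^ 2 * ⟪S (e i), e i⟫)
        - ⟪S (C (x - y)), x - y⟫
        - ⟪S (C (C (DU x) - C (DU y))), x - y⟫)
    - 3 * kk ^ 5 * ‖C (S (x - y))‖ ^ 2

open Real

lemma norm_sub_sq_le {E : Type*} [SeminormedAddCommGroup E] (u v : E) :
    ‖u - v‖ ^ 2 ≤ 2 * (‖u‖ ^ 2 + ‖v‖ ^ 2) :=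
  (pow_le_pow_left₀ (norm_nonneg _) (norm_sub_le u v) 2).trans add_sq_le

section InnerProductBounds

variable {E : Type*} [NormedAddCommGroup E] [InnerProductSpace ℝ E]

lemma abs_inner_add_add_le (u p v q : E) :
    |⟪u + p, v + q⟫| ≤ ‖u‖ ^ 2 + ‖p‖ ^ 2 + (‖v‖ ^ 2 + ‖q‖ ^ 2) := by
  have hup := (pow_le_pow_left₀ (norm_nonneg _) (norm_add_le u p) 2).trans add_sq_le
  have hvq := (pow_le_pow_left₀ (norm_nonneg _) (norm_add_le v q) 2).trans add_sq_le
  nlinarith [abs_real_inner_le_norm (u + p) (v + q), sq_nonneg (‖u + p‖ - ‖v + q‖)]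

lemma abs_inner_apply_sub_sub_le (M : E →L[ℝ] E) (p q u v : E) :
    |⟪M (p - q), u - v⟫| ≤ ‖M‖ * (‖p‖ ^ 2 + ‖q‖ ^ 2 + (‖u‖ ^ 2 + ‖v‖ ^ 2)) := by
  have hM : ‖M (p - q)‖ ≤ ‖M‖ * ‖p - q‖ := M.le_opNorm _
  have hpq := norm_sub_sq_le p q
  have huv := norm_sub_sq_le u v
  have hprod : ‖p - q‖ * ‖u - v‖ ≤ ‖p‖ ^ 2 + ‖q‖ ^ 2 + (‖u‖ ^ 2 + ‖v‖ ^ 2) := by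
    nlinarith [sq_nonneg (‖p - q‖ - ‖u - v‖)]
  calc |⟪M (p - q), u - v⟫| ≤ ‖M (p - q)‖ * ‖u - v‖ := abs_real_inner_le_norm _ _
    _ ≤ ‖M‖ * ‖p - q‖ * ‖u - v‖ := by gcongr
    _ ≤ ‖M‖ * (‖p‖ ^ 2 + ‖q‖ ^ 2 + (‖u‖ ^ 2 + ‖v‖ ^ 2)) := by
      rw [mul_assoc]; gcongr

lemma norm_apply_sub_sq_le (M : E →L[ℝ] E) (u v : E) :
    ‖M (u - v)‖ ^ 2 ≤ 2 * ‖M‖ ^ 2 * (‖u‖ ^ 2 + ‖v‖ ^ 2) :=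
  calc ‖M (u - v)‖ ^ 2 ≤ (‖M‖ * ‖u - v‖) ^ 2 := by gcongr; exact M.le_opNorm _
    _ ≤ 2 * ‖M‖ ^ 2 * (‖u‖ ^ 2 + ‖v‖ ^ 2) := by
      rw [mul_pow, mul_comm 2, mul_assoc]; gcongr; exact norm_sub_sq_le u v

end InnerProductBounds

lemma abs_biquadratic_le {A B D M : ℝ} (hA : |A| ≤ M) (hB : |B| ≤ M) (hD : |D| ≤ M) (η : ℝ) :
    |A + η ^ 2 * B + η ^ 4 * D| ≤ (1 + η ^ 2 + η ^ 4) * M := by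
  have h2 : |η ^ 2 * B| ≤ η ^ 2 * M := by
    rw [abs_mul, abs_of_nonneg (by positivity)]; gcongr
  have h4 : |η ^ 4 * D| ≤ η ^ 4 * M := by
    rw [abs_mul, abs_of_nonneg (by positivity)]; gcongr
  calc |A + η ^ 2 * B + η ^ 4 * D| ≤ |A| + |η ^ 2 * B| + |η ^ 4 * D| :=
        abs_add_three _ _ _
    _ ≤ (1 + η ^ 2 + η ^ 4) * M := by linarith

lemma measurable_of_hasGradientAt {X : Type*} [NormedAddCommGroup X] [InnerProductSpace ℝ X]
    [CompleteSpace X] [MeasurableSpace X] [BorelSpace X] {f : X → ℝ} {f' : X → X}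
    (h : ∀ x, HasGradientAt f (f' x) x) : Measurable f' := by
  have hf' : f' = fun x => (InnerProductSpace.toDual ℝ X).symm (fderiv ℝ f x) :=
    funext fun x => (h x).gradient.symm
  rw [hf']
  exact (InnerProductSpace.toDual ℝ X).symm.continuous.measurable.comp (measurable_fderiv ℝ f)

lemma integral_integral_eq_of_forall_integral_eq {α β γ E : Type*} [MeasurableSpace α]
    [MeasurableSpace β] [MeasurableSpace γ] [NormedAddCommGroup E] [NormedSpace ℝ E]
    {μ : Measure α} {ν : Measure β} {ρ : Measure γ} [SFinite μ] [SFinite ν] [SFinite ρ]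
    {F : γ → α → β → E} {G : α → β → E}
    (hF : Integrable (fun z : γ × α × β => F z.1 z.2.1 z.2.2) (ρ.prod (μ.prod ν)))
    (hG : ∀ x y, ∫ t, F t x y ∂ρ = G x y) :
    ∫ x, ∫ y, G x y ∂ν ∂μ = ∫ t, ∫ x, ∫ y, F t x y ∂ν ∂μ ∂ρ := by
  have hG_int : Integrable (fun p : α × β => G p.1 p.2) (μ.prod ν) := by
    simpa only [hG] using hF.integral_prod_right
  calc ∫ x, ∫ y, G x y ∂ν ∂μ = ∫ p, G p.1 p.2 ∂μ.prod ν := integral_integral hG_int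
    _ = ∫ p, ∫ t, F t p.1 p.2 ∂ρ ∂μ.prod ν := by simp only [hG]
    _ = ∫ t, ∫ p, F t p.1 p.2 ∂μ.prod ν ∂ρ := (integral_integral_swap hF).symm
    _ = ∫ t, ∫ x, ∫ y, F t x y ∂ν ∂μ ∂ρ :=
      integral_congr_ae (hF.prod_right_ae.mono fun t ht => (integral_integral ht).symm)

section GaussianMoments

variable {b : ℝ}

lemma integrable_pow_mul_exp_neg_mul_sq (hb : 0 < b) (n : ℕ) :
    Integrable fun x : ℝ => x ^ n * rexp (-b * x ^ 2) := by
  have hn : (-1 : ℝ) < n := neg_one_lt_zero.trans_le n.cast_nonneg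
  simpa [rpow_natCast] using integrable_rpow_mul_exp_neg_mul_sq hb hn

lemma integral_pow_add_two_mul_exp_neg_mul_sq (hb : 0 < b) (n : ℕ) :
    ∫ x : ℝ, x ^ (n + 2) * rexp (-b * x ^ 2)
      = (n + 1) / (2 * b) * ∫ x : ℝ, x ^ n * rexp (-b * x ^ 2) := by
  have hderiv : ∀ x : ℝ, HasDerivAt (fun x => x ^ (n + 1) * rexp (-b * x ^ 2))
      ((n + 1) * (x ^ n * rexp (-b * x ^ 2)) - 2 * b * (x ^ (n + 2) * rexp (-b * x ^ 2))) x := by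
    intro x
    have h := (hasDerivAt_pow (n + 1) x).mul ((hasDerivAt_pow 2 x).const_mul (-b)).exp
    refine h.congr_deriv ?_
    simp only [Nat.add_sub_cancel]
    push_cast
    ring
  have hn := (integrable_pow_mul_exp_neg_mul_sq hb n).const_mul ((n : ℝ) + 1)
  have hn2 := (integrable_pow_mul_exp_neg_mul_sq hb (n + 2)).const_mul (2 * b)
  have h0 := integral_eq_zero_of_hasDerivAt_of_integrable hderiv (hn.sub hn2)
    (integrable_pow_mul_exp_neg_mul_sq hb (n + 1))
  rw [integral_sub hn hn2, integral_const_mul, integral_const_mul] at h0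
  have h2b : 2 * b ≠ 0 := by positivity
  rw [div_mul_eq_mul_div, eq_div_iff h2b]
  linarith

lemma integral_exp_mul_biquadratic_gaussianReal {a : ℝ} (ha : 0 ≤ a) (A B D : ℝ) :
    ∫ η, rexp (-(η ^ 2 / 2) * a) * (A + η ^ 2 * B + η ^ 4 * D) ∂gaussianReal 0 1
      = (a + 1) ^ (-(1 / 2) : ℝ) * A + ((a + 1) ^ (-(1 / 2) : ℝ)) ^ 3 * B
        + 3 * ((a + 1) ^ (-(1 / 2) : ℝ)) ^ 5 * D := by
  set b := (a + 1) / 2 with hb_def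
  have hb : 0 < b := by positivity
  set c := (√(2 * π))⁻¹
  -- exponents written as `0 + 2` and `2 + 2` so that the reduction formula rewrites them
  have hpdf (η : ℝ) :
      gaussianPDFReal 0 1 η * (rexp (-(η ^ 2 / 2) * a) * (A + η ^ 2 * B + η ^ 4 * D))
          = c * A * (η ^ 0 * rexp (-b * η ^ 2)) + c * B * (η ^ (0 + 2) * rexp (-b * η ^ 2))
          + c * D * (η ^ (2 + 2) * rexp (-b * η ^ 2)) := by
    have hexp : rexp (-η ^ 2 / 2) * rexp (-(η ^ 2 / 2) * a) = rexp (-b * η ^ 2) := by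
      rw [← Real.exp_add, hb_def]; ring_nf
    simp only [gaussianPDFReal_def, NNReal.coe_one, mul_one, sub_zero]
    linear_combination (c * (A + η ^ 2 * B + η ^ 4 * D)) * hexp
  have i0 := integrable_pow_mul_exp_neg_mul_sq hb 0
  have i2 := integrable_pow_mul_exp_neg_mul_sq hb (0 + 2)
  have i4 := integrable_pow_mul_exp_neg_mul_sq hb (2 + 2)
  rw [integral_gaussianReal_eq_integral_smul one_ne_zero]
  simp only [smul_eq_mul, hpdf]
  rw [integral_add, integral_add, integral_const_mul, integral_const_mul,
    integral_const_mul, integral_pow_add_two_mul_exp_neg_mul_sq hb,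
    integral_pow_add_two_mul_exp_neg_mul_sq hb, integral_pow_add_two_mul_exp_neg_mul_sq hb]
  · simp only [pow_zero, one_mul, integral_gaussian]
    set k := (a + 1) ^ (-(1 / 2) : ℝ)
    have hk_sq : k ^ 2 = 1 / (2 * b) := by
      rw [← rpow_natCast, ← rpow_mul (by positivity), hb_def]
      norm_num [rpow_neg_one]
    have hk : c * √(π / b) = k := by
      refine (pow_left_inj₀ (by positivity) (by positivity) two_ne_zero).mp ?_
      rw [hk_sq, mul_pow, inv_pow, sq_sqrt (by positivity), sq_sqrt (by positivity)]
      field_simp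
    have hdiv (t : ℝ) : t / (2 * b) = t * k ^ 2 := by rw [hk_sq]; ring
    simp only [hdiv]
    push_cast
    linear_combination (A + B * k ^ 2 + 3 * D * k ^ 4) * hk
  exacts [i0.const_mul _, i2.const_mul _, (i0.const_mul _).add (i2.const_mul _),
    i4.const_mul _]

end GaussianMoments

section SteinKernels

variable {X : Type*} [NormedAddCommGroup X] [InnerProductSpace ℝ X] [CompleteSpace X]
  (C T : X →L[ℝ] X) (DU : X → X) (e : ℕ → X) (l : ℕ → ℝ)

lemma integral_hvSE_gaussianReal (x y : X) :
    ∫ η, hvSE C T DU e l η x y ∂gaussianReal 0 1 = hvIMQ C T DU e l x y := by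
  set S := (ContinuousLinearMap.adjoint T).comp T
  have h := integral_exp_mul_biquadratic_gaussianReal (sq_nonneg ‖T (x - y)‖)
    ⟪x + C (DU x), y + C (DU y)⟫
    ((∑' i, l i ^ 2 * ⟪S (e i), e i⟫) - ⟪S (C (x - y)), x - y⟫
      - ⟪S (C (C (DU x) - C (DU y))), x - y⟫)
    (-‖C (S (x - y))‖ ^ 2)
  simp only [hvSE, hvIMQ]
  convert h using 1
  · congr 1; funext η; ring
  · ring

lemma abs_hvSE_le {M : ℝ} (η : ℝ) (x y : X) :
    letI S := (ContinuousLinearMap.adjoint T).comp T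
    |⟪x + C (DU x), y + C (DU y)⟫| ≤ M →
    |(∑' i, l i ^ 2 * ⟪S (e i), e i⟫) - ⟪S (C (x - y)), x - y⟫
      - ⟪S (C (C (DU x) - C (DU y))), x - y⟫| ≤ M →
    ‖C (S (x - y))‖ ^ 2 ≤ M →
    |hvSE C T DU e l η x y| ≤ (1 + η ^ 2 + η ^ 4) * M := by
  intro hA hB hD
  set S := (ContinuousLinearMap.adjoint T).comp T
  have hD' : |-‖C (S (x - y))‖ ^ 2| ≤ M := by rwa [abs_neg, abs_of_nonneg (sq_nonneg _)]
  have hE : rexp (-(η ^ 2 / 2) * ‖T (x - y)‖ ^ 2) ≤ 1 :=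
    exp_le_one_iff.mpr (by nlinarith [sq_nonneg η, sq_nonneg ‖T (x - y)‖])
  refine le_trans (le_of_eq ?_)
    ((mul_le_of_le_one_left (abs_nonneg _) hE).trans (abs_biquadratic_le hA hB hD' η))
  rw [← abs_of_pos (exp_pos (-(η ^ 2 / 2) * ‖T (x - y)‖ ^ 2)), ← abs_mul]
  congr 1
  simp only [hvSE]
  ring

lemma exists_abs_hvSE_le : ∃ K, ∀ η x y, |hvSE C T DU e l η x y| ≤
    (1 + η ^ 2 + η ^ 4) * (K * (1 + (‖x‖ ^ 2 + ‖C (DU x)‖ ^ 2 + (‖y‖ ^ 2 + ‖C (DU y)‖ ^ 2)))) := by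
  set S := (ContinuousLinearMap.adjoint T).comp T
  set tr := ∑' i, l i ^ 2 * ⟪S (e i), e i⟫
  set κ := ‖S‖ * ‖C‖
  refine ⟨|tr| + 3 * (1 + κ) ^ 2, fun η x y => ?_⟩
  set W := ‖x‖ ^ 2 + ‖C (DU x)‖ ^ 2 + (‖y‖ ^ 2 + ‖C (DU y)‖ ^ 2)
  have hW : 0 ≤ W := by positivity
  have hκ : 0 ≤ κ := by positivity
  have hxy : ‖x‖ ^ 2 + ‖y‖ ^ 2 ≤ W := by
    simp only [W]; nlinarith [norm_nonneg (C (DU x)), norm_nonneg (C (DU y))]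
  have hSC : ‖S.comp C‖ ≤ κ := S.opNorm_comp_le C
  have hCS : ‖C.comp S‖ ≤ κ := (C.opNorm_comp_le S).trans_eq (mul_comm _ _)
  have hA : |⟪x + C (DU x), y + C (DU y)⟫| ≤ W :=
    abs_inner_add_add_le x (C (DU x)) y (C (DU y))
  have hB₁ : |⟪S (C (x - y)), x - y⟫| ≤ 2 * κ * W :=
    calc _ ≤ ‖S.comp C‖ * (‖x‖ ^ 2 + ‖y‖ ^ 2 + (‖x‖ ^ 2 + ‖y‖ ^ 2)) :=
          abs_inner_apply_sub_sub_le (S.comp C) x y x y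
      _ ≤ κ * (W + W) := by gcongr
      _ = 2 * κ * W := by ring
  have hB₂ : |⟪S (C (C (DU x) - C (DU y))), x - y⟫| ≤ κ * W :=
    calc _ ≤ ‖S.comp C‖ * (‖C (DU x)‖ ^ 2 + ‖C (DU y)‖ ^ 2 + (‖x‖ ^ 2 + ‖y‖ ^ 2)) :=
          abs_inner_apply_sub_sub_le (S.comp C) (C (DU x)) (C (DU y)) x y
      _ ≤ κ * W := by gcongr; exact le_of_eq (by ring)
  have hD : ‖C (S (x - y))‖ ^ 2 ≤ 2 * κ ^ 2 * W :=
    calc _ ≤ 2 * ‖C.comp S‖ ^ 2 * (‖x‖ ^ 2 + ‖y‖ ^ 2) :=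
          norm_apply_sub_sq_le (C.comp S) x y
      _ ≤ 2 * κ ^ 2 * W := by gcongr
  have hM : |tr| + 3 * (1 + κ) ^ 2 * W ≤ (|tr| + 3 * (1 + κ) ^ 2) * (1 + W) := by
    nlinarith [mul_nonneg (abs_nonneg tr) hW, sq_nonneg (1 + κ)]
  have hκW : W + 3 * κ * W + 2 * κ ^ 2 * W ≤ 3 * (1 + κ) ^ 2 * W := by
    nlinarith [mul_nonneg hκ hW, mul_nonneg (sq_nonneg κ) hW]
  refine abs_hvSE_le C T DU e l η x y ?_ ?_ ?_
  · nlinarith [abs_nonneg tr]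
  · have h₁ := abs_sub (tr - ⟪S (C (x - y)), x - y⟫) ⟪S (C (C (DU x) - C (DU y))), x - y⟫
    have h₂ := abs_sub tr ⟪S (C (x - y)), x - y⟫
    nlinarith [mul_nonneg (sq_nonneg κ) hW]
  · nlinarith [abs_nonneg tr]

variable [MeasurableSpace X] [BorelSpace X] [SecondCountableTopology X]

lemma measurable_hvSE (hDU : Measurable DU) :
    Measurable fun z : ℝ × X × X => hvSE C T DU e l z.1 z.2.1 z.2.2 := by
  unfold hvSE
  fun_prop

lemma integrable_hvSE (hDU : Measurable DU) {Q : Measure X} [IsFiniteMeasure Q]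
    (hQ2 : Integrable (fun x => ‖x‖ ^ 2) Q) (hQU : Integrable (fun x => ‖C (DU x)‖ ^ 2) Q) :
    Integrable (fun z : ℝ × X × X => hvSE C T DU e l z.1 z.2.1 z.2.2)
      ((gaussianReal 0 1).prod (Q.prod Q)) := by
  obtain ⟨K, hK⟩ := exists_abs_hvSE_le C T DU e l
  have hmoment (n : ℕ) : Integrable (fun η : ℝ => η ^ (2 * n)) (gaussianReal 0 1) := by
    have hLp :=
      memLp_id_gaussianReal' (μ := 0) (v := 1) (2 * n : ℕ) (ENNReal.natCast_ne_top _)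
    refine hLp.integrable_norm_pow'.congr (ae_of_all _ fun η => ?_)
    simp [pow_mul]
  have hpoly : Integrable (fun η : ℝ => 1 + η ^ 2 + η ^ 4) (gaussianReal 0 1) :=
    ((integrable_const 1).add (hmoment 1)).add (hmoment 2)
  have hw := hQ2.add hQU
  have hweight : Integrable (fun p : X × X =>
      K * (1 + (‖p.1‖ ^ 2 + ‖C (DU p.1)‖ ^ 2 + (‖p.2‖ ^ 2 + ‖C (DU p.2)‖ ^ 2)))) (Q.prod Q) :=
    ((integrable_const 1).add ((hw.comp_fst Q).add (hw.comp_snd Q))).const_mul K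
  exact (hpoly.mul_prod hweight).mono' (measurable_hvSE C T DU e l hDU).aestronglyMeasurable
    (ae_of_all _ fun z => hK z.1 z.2.1 z.2.2)

end SteinKernels

theorem imq_ksd_gaussian_mixture_general
    {X : Type*} [NormedAddCommGroup X] [InnerProductSpace ℝ X] [CompleteSpace X]
    [MeasurableSpace X] [BorelSpace X] [SecondCountableTopology X]
    -- the covariance operator and its eigendecomposition
    (C : X →L[ℝ] X)
    (e : HilbertBasis ℕ ℝ X) (l : ℕ → ℝ)
    -- the potential `U` and its gradient `DU`
    (U : X → ℝ) (DU : X → X)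
    (hU : ∀ x, HasFDerivAt U ((InnerProductSpace.toDual ℝ X) (DU x) : X →L[ℝ] ℝ) x)
    -- the candidate measure `Q` and its moment conditions
    (Q : Measure X) [IsProbabilityMeasure Q]
    (hQ2 : Integrable (fun x => ‖x‖ ^ 2) Q)
    (hQU : Integrable (fun x => ‖C (DU x)‖ ^ 2) Q)
    -- the operator `T`
    (T : X →L[ℝ] X) :
    ∫ x, ∫ y, hvIMQ C T DU (fun i => e i) l x y ∂Q ∂Q
      = ∫ η, (∫ x, ∫ y, hvSE C T DU (fun i => e i) l η x y ∂Q ∂Q)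
          ∂(gaussianReal 0 1) :=
  integral_integral_eq_of_forall_integral_eq
    (integrable_hvSE C T DU _ l (measurable_of_hasGradientAt hU) hQ2 hQU)
    (integral_hvSE_gaussianReal C T DU _ l)

/-- **Gaussian-mixture representation of the IMQ kernel Stein discrepancy**
(identity established in the proof of Corollary 2): the double `Q`-integral of the
IMQ-`T` Stein kernel is the standard Gaussian mixture (over `η`) of the double
`Q`-integrals of the SE-`ηT` Stein kernels. -/
theorem imq_ksd_gaussian_mixture
    {X : Type*} [NormedAddCommGroup X] [InnerProductSpace ℝ X] [CompleteSpace X]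
    [MeasurableSpace X] [BorelSpace X] [SecondCountableTopology X]
    -- the covariance operator and its eigendecomposition
    (C : X →L[ℝ] X) (hCsa : IsSelfAdjoint C)
    (e : HilbertBasis ℕ ℝ X) (l : ℕ → ℝ) (hl : ∀ i, 0 < l i)
    (hCe : ∀ i, C (e i) = l i • e i) (hltr : Summable l)
    -- the potential `U` and its gradient `DU`
    (U : X → ℝ) (DU : X → X)
    (hU : ∀ x, HasFDerivAt U ((InnerProductSpace.toDual ℝ X) (DU x) : X →L[ℝ] ℝ) x)
    -- the candidate measure `Q` and its moment conditions
    (Q : Measure X) [IsProbabilityMeasure Q]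
    (hQ2 : Integrable (fun x => ‖x‖ ^ 2) Q)
    (hQU : Integrable (fun x => ‖C (DU x)‖ ^ 2) Q)
    -- the operator `T`
    (T : X →L[ℝ] X) :
    ∫ x, ∫ y, hvIMQ C T DU (fun i => e i) l x y ∂Q ∂Q
      = ∫ η, (∫ x, ∫ y, hvSE C T DU (fun i => e i) l η x y ∂Q ∂Q)
          ∂(gaussianReal 0 1) :=
  imq_ksd_gaussian_mixture_general C e l U DU hU Q hQ2 hQU T
end

section
/- Explicit vectorised Stein kernel for the squared-exponential kernel (Proposition 4, SE case): let T : X → X be a bounded linear operator, S = T*T, and k(x,y) = exp(−½‖Tx − Ty‖²). Then for all x, y ∈ X the vectorised Stein kernel satisfies h_v(x,y) = k(x,y) · ( ⟨x + C DU(x), y + C DU(y)⟩ − ⟨SC(x−y), x−y⟩ − ⟨SC(C DU(x) − C DU(y)), x−y⟩ + Tr(SC²) − ‖CS(x−y)‖² ), where Tr(SC²) := ∑_{i≥1} λ_i² ⟨S e_i, e_i⟩. -/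
/-
Write `S = T†T`. Differentiating `k(x,y) = exp(-½‖Tx - Ty‖²)` gives `D₁k(x,y) = -k(x,y)⟪S(x-y), ·⟫`,
`D₂k(x,y) = k(x,y)⟪S(x-y), ·⟫` and `D₂D₁k(x,y)[v,w] = k(x,y)(⟪Sw, v⟫ - ⟪S(x-y), v⟫⟪S(x-y), w⟫)`.
On the eigenbasis, `λᵢ⟪S(x-y), eᵢ⟫ = ⟪CS(x-y), eᵢ⟫` since `C` is self-adjoint, so by Parseval the
trace term splits into `Tr(SC²) - ‖CS(x-y)‖²`; both series converge because `∑ λᵢ² < ∞`.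
The first-order terms then rearrange using the symmetry of `S`.
-/

open MeasureTheory ProbabilityTheory Complex Filter
open scoped RealInnerProductSpace

/-- The vectorised Stein kernel `h_v` associated to the kernel `k`, the covariance
operator `C` (with eigenbasis `e` and eigenvalues `l`) and the potential gradient `DU`. -/
noncomputable def steinKernelHv {X : Type*} [NormedAddCommGroup X] [InnerProductSpace ℝ X]
    (k : X → X → ℝ) (C : X →L[ℝ] X) (DU : X → X) (e : ℕ → X) (l : ℕ → ℝ)
    (x x' : X) : ℝ :=
  (∑' i, l i ^ 2 *
      fderiv ℝ (fun y1 => fderiv ℝ (fun x1 => k x1 y1) x (e i)) x' (e i))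
  - fderiv ℝ (fun x1 => k x1 x') x (C x' + C (C (DU x')))
  - fderiv ℝ (fun y1 => k x y1) x' (C x + C (C (DU x)))
  + k x x' * ⟪x + C (DU x), x' + C (DU x')⟫

open ContinuousLinearMap
open scoped InnerProduct

theorem Summable.sq {ι : Type*} {l : ι → ℝ} (hl : Summable l) :
    Summable fun i => l i ^ 2 := by
  refine hl.abs.of_norm_bounded_eventually ?_
  filter_upwards [hl.abs.tendsto_cofinite_zero.eventually_le_const one_pos] with i hi
  rw [Real.norm_eq_abs, abs_pow, pow_two]
  exact mul_le_of_le_one_left (abs_nonneg _) hi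

section Eigenbasis

variable {ι X : Type*} [NormedAddCommGroup X] [InnerProductSpace ℝ X]

theorem HilbertBasis.hasSum_inner_sq (e : HilbertBasis ι ℝ X) (v : X) :
    HasSum (fun i => ⟪v, e i⟫ ^ 2) (‖v‖ ^ 2) := by
  simpa only [sq, real_inner_comm v, real_inner_self_eq_norm_mul_norm] using
    e.hasSum_inner_mul_inner v v

theorem HilbertBasis.summable_sq_mul_inner_apply_self (e : HilbertBasis ι ℝ X) {l : ι → ℝ}
    (hl : Summable fun i => l i ^ 2) (S : X →L[ℝ] X) :
    Summable fun i => l i ^ 2 * ⟪S (e i), e i⟫ := by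
  refine (hl.mul_left ‖S‖).of_norm_bounded fun i => ?_
  have hSe : |⟪S (e i), e i⟫| ≤ ‖S‖ :=
    calc |⟪S (e i), e i⟫| ≤ ‖S (e i)‖ * ‖e i‖ := abs_real_inner_le_norm _ _
      _ ≤ ‖S‖ * ‖e i‖ * ‖e i‖ := by gcongr; exact S.le_opNorm _
      _ = ‖S‖ := by simp [e.orthonormal.1 i]
  rw [Real.norm_eq_abs, abs_mul, abs_sq, mul_comm ‖S‖]
  exact mul_le_mul_of_nonneg_left hSe (sq_nonneg _)

variable [CompleteSpace X] {C : X →L[ℝ] X} {e : HilbertBasis ι ℝ X} {l : ι → ℝ}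

theorem IsSelfAdjoint.inner_apply_eigenvector (hC : IsSelfAdjoint C)
    (hCe : ∀ i, C (e i) = l i • e i) (v : X) (i : ι) : ⟪C v, e i⟫ = l i * ⟪v, e i⟫ := by
  rw [hC.isSymmetric.apply_clm, hCe, real_inner_smul_right]

theorem IsSelfAdjoint.hasSum_eigenvalue_sq_mul_inner_sq (hC : IsSelfAdjoint C)
    (hCe : ∀ i, C (e i) = l i • e i) (v : X) :
    HasSum (fun i => l i ^ 2 * ⟪v, e i⟫ ^ 2) (‖C v‖ ^ 2) := by
  simpa only [hC.inner_apply_eigenvector hCe, mul_pow] using e.hasSum_inner_sq (C v)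

end Eigenbasis

section SEKernel

variable {X Y : Type*} [NormedAddCommGroup X] [InnerProductSpace ℝ X]
  [NormedAddCommGroup Y] [InnerProductSpace ℝ Y] (T : X →L[ℝ] Y)

noncomputable def seKernel (x y : X) : ℝ := Real.exp (-(1 / 2) * ‖T x - T y‖ ^ 2)

theorem seKernel_comm (x y : X) : seKernel T x y = seKernel T y x := by
  rw [seKernel, seKernel, norm_sub_rev]

variable [CompleteSpace X] [CompleteSpace Y]

theorem hasFDerivAt_seKernel_left (x y : X) :
    HasFDerivAt (seKernel T · y) (-seKernel T x y • innerSL ℝ ((T† ∘L T) (x - y))) x := by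
  refine ((T.hasFDerivAt.sub_const (T y)).norm_sq.const_mul (-(1 / 2) : ℝ)).exp.congr_fderiv ?_
  ext v
  simp [seKernel, adjoint_inner_left]

theorem hasFDerivAt_seKernel_right (x y : X) :
    HasFDerivAt (seKernel T x) (seKernel T x y • innerSL ℝ ((T† ∘L T) (x - y))) y := by
  have h := hasFDerivAt_seKernel_left T y x
  rw [show (seKernel T · x) = seKernel T x from funext fun _ => seKernel_comm ..] at h
  refine h.congr_fderiv ?_
  rw [seKernel_comm T y x, ← neg_sub x y, map_neg, map_neg, smul_neg, neg_smul, neg_neg]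

theorem hasFDerivAt_fderiv_seKernel_left (x y v : X) :
    HasFDerivAt (fun y₁ => fderiv ℝ (seKernel T · y₁) x v)
      (seKernel T x y • ((innerSL ℝ v).comp (T† ∘L T)
        - ⟪(T† ∘L T) (x - y), v⟫ • innerSL ℝ ((T† ∘L T) (x - y)))) y := by
  have hinner : HasFDerivAt (fun y₁ => ⟪(T† ∘L T) (x - y₁), v⟫)
      (-(innerSL ℝ v).comp (T† ∘L T)) y := by
    have h := ((innerSL ℝ v).comp (T† ∘L T)).hasFDerivAt.comp y ((hasFDerivAt_id y).const_sub x)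
    refine (h.congr_fderiv ?_).congr_of_eventuallyEq (.of_forall fun y₁ => ?_)
    · ext w
      simp
    · simp [real_inner_comm v]
  have h := ((hasFDerivAt_seKernel_right T x y).mul hinner).neg
  refine (h.congr_fderiv ?_).congr_of_eventuallyEq (.of_forall fun y₁ => ?_)
  · ext w
    simp only [smul_neg, comp_apply, map_sub, neg_add_rev, neg_neg, add_apply, neg_apply,
      smul_apply, sub_apply, coe_innerSL_apply, smul_eq_mul]
    ring
  · simp [(hasFDerivAt_seKernel_left T x y₁).fderiv, inner_sub_left]

theorem fderiv_fderiv_seKernel_left (x y v w : X) :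
    fderiv ℝ (fun y₁ => fderiv ℝ (seKernel T · y₁) x v) y w
      = seKernel T x y * (⟪(T† ∘L T) w, v⟫ - ⟪(T† ∘L T) (x - y), v⟫ * ⟪(T† ∘L T) (x - y), w⟫) := by
  rw [(hasFDerivAt_fderiv_seKernel_left T x y v).fderiv]
  simp [real_inner_comm v, inner_sub_left]

end SEKernel

theorem tsum_eigenvalue_sq_mul_fderiv_fderiv_seKernel {ι X Y : Type*}
    [NormedAddCommGroup X] [InnerProductSpace ℝ X] [CompleteSpace X]
    [NormedAddCommGroup Y] [InnerProductSpace ℝ Y] [CompleteSpace Y]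
    {C : X →L[ℝ] X} (hC : IsSelfAdjoint C) {e : HilbertBasis ι ℝ X} {l : ι → ℝ}
    (hCe : ∀ i, C (e i) = l i • e i) (hl : Summable fun i => l i ^ 2) (T : X →L[ℝ] Y) (x y : X) :
    ∑' i, l i ^ 2 * fderiv ℝ (fun y₁ => fderiv ℝ (seKernel T · y₁) x (e i)) y (e i)
      = seKernel T x y * (∑' i, l i ^ 2 * ⟪(T† ∘L T) (e i), e i⟫ - ‖C ((T† ∘L T) (x - y))‖ ^ 2) := by
  have hsq := hC.hasSum_eigenvalue_sq_mul_inner_sq hCe ((T† ∘L T) (x - y))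
  calc _ = ∑' i, seKernel T x y *
        (l i ^ 2 * ⟪(T† ∘L T) (e i), e i⟫ - l i ^ 2 * ⟪(T† ∘L T) (x - y), e i⟫ ^ 2) :=
        tsum_congr fun i => by rw [fderiv_fderiv_seKernel_left]; ring
    _ = _ := by
      rw [tsum_mul_left, (e.summable_sq_mul_inner_apply_self hl _).tsum_sub hsq.summable,
        hsq.tsum_eq]

theorem se_kernel_stein_kernel_explicit_general
    {X : Type*} [NormedAddCommGroup X] [InnerProductSpace ℝ X] [CompleteSpace X]
    -- the covariance operator and its eigendecomposition
    (C : X →L[ℝ] X) (hCsa : IsSelfAdjoint C)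
    (e : HilbertBasis ℕ ℝ X) (l : ℕ → ℝ)
    (hCe : ∀ i, C (e i) = l i • e i) (hltr : Summable l)
    -- the potential `U` and its gradient `DU`
    (DU : X → X)
    -- the operator `T`, `S = T*T`, and the SE-`T` kernel
    (T : X →L[ℝ] X) (S : X →L[ℝ] X)
    (hS : S = (ContinuousLinearMap.adjoint T).comp T)
    (k : X → X → ℝ)
    (hk : ∀ x y : X, k x y = Real.exp (-(1 / 2) * ‖T x - T y‖ ^ 2)) :
    ∀ x y : X,
      steinKernelHv k C DU (fun i => e i) l x y
        = k x y *
            (⟪x + C (DU x), y + C (DU y)⟫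
              - ⟪S (C (x - y)), x - y⟫
              - ⟪S (C (C (DU x) - C (DU y))), x - y⟫
              + (∑' i, l i ^ 2 * ⟪S (e i), e i⟫)
              - ‖C (S (x - y))‖ ^ 2) := by
  intro x y
  obtain rfl : k = seKernel T := funext₂ hk
  subst hS
  have hS_symm (a b : X) : ⟪(T† ∘L T) a, b⟫ = ⟪(T† ∘L T) b, a⟫ := by
    simp only [coe_comp, Function.comp_apply, adjoint_inner_left, real_inner_comm (T a)]
  rw [steinKernelHv, tsum_eigenvalue_sq_mul_fderiv_fderiv_seKernel hCsa hCe hltr.sq T,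
    (hasFDerivAt_seKernel_left T x y).fderiv, (hasFDerivAt_seKernel_right T x y).fderiv]
  simp only [FunLike.coe_smul, Pi.smul_apply, innerSL_apply_apply, smul_eq_mul]
  rw [hS_symm (C _), hS_symm (C _)]
  simp only [map_sub, inner_sub_right, inner_add_right]
  ring

/-- **Explicit vectorised Stein kernel for the squared-exponential kernel**
(Proposition 4, SE case): with `S = T*T` and `k(x,y) = exp(-½‖Tx - Ty‖²)`,
`h_v(x,y) = k(x,y)(⟪x + CDU(x), y + CDU(y)⟫ − ⟪SC(x−y), x−y⟫ −
⟪SC(CDU(x) − CDU(y)), x−y⟫ + Tr(SC²) − ‖CS(x−y)‖²)`, where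
`Tr(SC²) = ∑ᵢ λᵢ² ⟪S eᵢ, eᵢ⟫`. -/
theorem se_kernel_stein_kernel_explicit
    {X : Type*} [NormedAddCommGroup X] [InnerProductSpace ℝ X] [CompleteSpace X]
    [MeasurableSpace X] [BorelSpace X] [SecondCountableTopology X]
    -- the covariance operator and its eigendecomposition
    (C : X →L[ℝ] X) (hCsa : IsSelfAdjoint C)
    (e : HilbertBasis ℕ ℝ X) (l : ℕ → ℝ) (hl : ∀ i, 0 < l i)
    (hCe : ∀ i, C (e i) = l i • e i) (hltr : Summable l)
    -- the potential `U` and its gradient `DU`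
    (U : X → ℝ) (DU : X → X)
    (hU : ∀ x, HasFDerivAt U ((InnerProductSpace.toDual ℝ X) (DU x) : X →L[ℝ] ℝ) x)
    -- the operator `T`, `S = T*T`, and the SE-`T` kernel
    (T : X →L[ℝ] X) (S : X →L[ℝ] X)
    (hS : S = (ContinuousLinearMap.adjoint T).comp T)
    (k : X → X → ℝ)
    (hk : ∀ x y : X, k x y = Real.exp (-(1 / 2) * ‖T x - T y‖ ^ 2)) :
    ∀ x y : X,
      steinKernelHv k C DU (fun i => e i) l x y
        = k x y *
            (⟪x + C (DU x), y + C (DU y)⟫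
              - ⟪S (C (x - y)), x - y⟫
              - ⟪S (C (C (DU x) - C (DU y))), x - y⟫
              + (∑' i, l i ^ 2 * ⟪S (e i), e i⟫)
              - ‖C (S (x - y))‖ ^ 2) :=
  se_kernel_stein_kernel_explicit_general C hCsa e l hCe hltr DU T S hS k hk
end
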